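/- Lemma (monotone vanishing of η): Let υ*_δ denote a solution of the δ-parameterized market-clearing problem with dual multiplier η*_δ (chosen minimal among optima). If η*_π = 0 for some π ∈ [0,1) and η*_1 = 0, then for every δ ∈ [π, 1] there exists an optimal solution with η*_δ = 0. -/

import Mathlib

/-! The optimality system is jointly convex in the parameter and the solution, so the set of
parameters admitting a solution in a fixed convex set (here `η = 0`) is convex, i.e. an
interval of `ℝ`; it contains `π` and `1`, hence all of `[π, 1]`. -/

theorem convex_setOf_inter_nonempty {E : Type*} [AddCommGroup E] [Module ℝ E]
    {K : ℝ → Set E} {C : Set E}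
    (hK : ∀ δ₁ δ₂ : ℝ, ∀ u₁ u₂ : E, u₁ ∈ K δ₁ → u₂ ∈ K δ₂ →
      ∀ s t : ℝ, 0 ≤ s → 0 ≤ t → s + t = 1 → s • u₁ + t • u₂ ∈ K (s * δ₁ + t * δ₂))
    (hC : Convex ℝ C) :
    Convex ℝ {δ | (K δ ∩ C).Nonempty} := by
  rintro δ₁ ⟨u₁, hu₁K, hu₁C⟩ δ₂ ⟨u₂, hu₂K, hu₂C⟩ s t hs ht hst
  exact ⟨s • u₁ + t • u₂, hK δ₁ δ₂ u₁ u₂ hu₁K hu₂K s t hs ht hst, hC hu₁C hu₂C hs ht hst⟩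

theorem stmt4_general {V : Type*} [AddCommGroup V] [Module ℝ V]
    (K : ℝ → Set (V × ℝ))
    -- affine dependence on δ: convex combinations of solutions are solutions
    (hconv : ∀ δ₁ δ₂ : ℝ, ∀ u₁ u₂ : V × ℝ, u₁ ∈ K δ₁ → u₂ ∈ K δ₂ →
      ∀ s t : ℝ, 0 ≤ s → 0 ≤ t → s + t = 1 → s • u₁ + t • u₂ ∈ K (s * δ₁ + t * δ₂))
    (π : ℝ)
    (hπ0 : ∃ u : V, (u, (0 : ℝ)) ∈ K π)
    (h10 : ∃ u : V, (u, (0 : ℝ)) ∈ K 1) :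
    ∀ δ ∈ Set.Icc π 1, ∃ u : V, (u, (0 : ℝ)) ∈ K δ := by
  have hη : Convex ℝ {p : V × ℝ | p.2 = 0} :=
    (LinearMap.ker (LinearMap.snd ℝ V ℝ)).convex
  have hS := (convex_setOf_inter_nonempty hconv hη).ordConnected
  have exists_iff_nonempty {δ : ℝ} : (∃ u : V, (u, (0 : ℝ)) ∈ K δ) ↔ (K δ ∩ {p | p.2 = 0}).Nonempty :=
    ⟨fun ⟨u, hu⟩ ↦ ⟨(u, 0), hu, rfl⟩, fun ⟨⟨u, _⟩, hu, hη0⟩ ↦ ⟨u, hη0 ▸ hu⟩⟩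
  exact fun δ hδ ↦ exists_iff_nonempty.mpr (hS.out (exists_iff_nonempty.mp hπ0) (exists_iff_nonempty.mp h10) hδ)

/-- monotone vanishing of η: Let `K δ` be the set of solutions (υ, η) of the
δ-parameterized market-clearing optimality system, whose defining constraints are linear
in all variables and affine in δ, so that convex combinations of solutions are solutions
at the correspondingly combined parameter. If there is a solution with η = 0 at some
π ∈ [0,1) and a solution with η = 0 at δ = 1, then for every δ ∈ [π, 1] there is a
solution with η = 0. -/
theorem stmt4 {V : Type*} [AddCommGroup V] [Module ℝ V]
    (K : ℝ → Set (V × ℝ))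
    -- affine dependence on δ: convex combinations of solutions are solutions
    (hconv : ∀ δ₁ δ₂ : ℝ, ∀ u₁ u₂ : V × ℝ, u₁ ∈ K δ₁ → u₂ ∈ K δ₂ →
      ∀ s t : ℝ, 0 ≤ s → 0 ≤ t → s + t = 1 → s • u₁ + t • u₂ ∈ K (s * δ₁ + t * δ₂))
    (π : ℝ) (hπ : π ∈ Set.Ico (0 : ℝ) 1)
    (hπ0 : ∃ u : V, (u, (0 : ℝ)) ∈ K π)
    (h10 : ∃ u : V, (u, (0 : ℝ)) ∈ K 1) :
    ∀ δ ∈ Set.Icc π 1, ∃ u : V, (u, (0 : ℝ)) ∈ K δ :=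
  stmt4_general K hconv π hπ0 h10
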